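/- arXiv:2503.22542 — 4 statements merged into one kernel-verified Lean document; each statement's English description precedes it below -/
import Mathlib

section
/- Let m be a complex number with Im(ω)·Im(m) > 0 satisfying the equation -1/m = ω + m - |z|²/(ω + m) for ω ∈ ℂ \ ℝ and z ∈ ℂ, and define u = m/(ω + m) and β* = 1 - |m|² - |u|²|z|². Then β*·Im(m) = (1 - β*)·Im(ω). -/
open Complex

/-- β*·Im(m) = (1 - β*)·Im(ω) for solutions of the scalar Dyson equation. -/
theorem dyson_betaStar_identity (z ω m : ℂ) (hω : ω.im ≠ 0) (hm : ω.im * m.im > 0)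
    (heq : -1 / m = ω + m - ((‖z‖ ^ 2 : ℝ) : ℂ) / (ω + m)) :
    (1 - ‖m‖ ^ 2 - ‖m / (ω + m)‖ ^ 2 * ‖z‖ ^ 2) * m.im
      = (1 - (1 - ‖m‖ ^ 2 - ‖m / (ω + m)‖ ^ 2 * ‖z‖ ^ 2)) * ω.im := by
  have hm0 : m ≠ 0 := by
    intro h; rw [h] at hm; simp at hm
  have hs0 : ω + m ≠ 0 := by
    intro h
    have h1 : ω.im + m.im = 0 := by
      have := congrArg Complex.im h; simpa using this
    have h2 : m.im = -ω.im := by linarith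
    rw [h2] at hm
    nlinarith [sq_nonneg ω.im]
  have hn1 : Complex.normSq m ≠ 0 := by simpa using hm0
  have hn2 : Complex.normSq (ω + m) ≠ 0 := by simpa using hs0
  have h := congrArg Complex.im heq
  simp only [Complex.div_im, Complex.add_im, Complex.sub_im, Complex.neg_im,
    Complex.one_im, Complex.ofReal_im, Complex.ofReal_re, Complex.add_re,
    Complex.neg_re, Complex.one_re, neg_zero, zero_div, zero_sub, zero_mul] at h
  have hnorm_m : ‖m‖ ^ 2 = Complex.normSq m := by
    rw [← Complex.sq_norm]
  have hnorm_u : ‖m / (ω + m)‖ ^ 2 = Complex.normSq m / Complex.normSq (ω + m) := by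
    rw [← Complex.normSq_eq_norm_sq, Complex.normSq_div]
  rw [hnorm_m, hnorm_u]
  have e1 : Complex.normSq m = m.re ^ 2 + m.im ^ 2 := by
    simp [Complex.normSq_apply]; ring
  have e2 : Complex.normSq (ω + m) = (ω.re + m.re) ^ 2 + (ω.im + m.im) ^ 2 := by
    simp [Complex.normSq_apply]; ring
  field_simp at h ⊢
  rw [e1, e2] at h ⊢
  nlinarith [h, sq_nonneg (ω.im + m.im), sq_nonneg m.re]
end

section
/- Let m solve -1/m = ω + m - |z|²/(ω + m) with η·Im(m) > 0 where η = Im ω ≠ 0, and u = m/(ω+m). Then |m|² + |u|²·|z|² < 1; in particular |u|·|z| < 1 and |m| < 1. -/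
open Complex

/-- positivity of β*, i.e. |m|² + |u|²|z|² < 1, hence |u||z| < 1 and |m| < 1. -/
theorem dyson_betaStar_pos (z ω m : ℂ) (hω : ω.im ≠ 0) (hm : ω.im * m.im > 0)
    (heq : -1 / m = ω + m - ((‖z‖ ^ 2 : ℝ) : ℂ) / (ω + m)) :
    ‖m‖ ^ 2 + ‖m / (ω + m)‖ ^ 2 * ‖z‖ ^ 2 < 1 ∧
      ‖m / (ω + m)‖ * ‖z‖ < 1 ∧ ‖m‖ < 1 := by
  have hmim : m.im ≠ 0 := by
    intro h; rw [h, mul_zero] at hm; exact lt_irrefl 0 hm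
  have hm0 : m ≠ 0 := fun h => hmim (by rw [h]; rfl)
  have hwim : (ω + m).im ≠ 0 := by
    simp only [Complex.add_im]
    intro h
    nlinarith [sq_nonneg ω.im, sq_nonneg m.im]
  have hw0 : ω + m ≠ 0 := fun h => hwim (by rw [h]; rfl)
  have hnm : Complex.normSq m > 0 := Complex.normSq_pos.mpr hm0
  have hnw : Complex.normSq (ω + m) > 0 := Complex.normSq_pos.mpr hw0
  have h := congrArg Complex.im heq
  simp only [Complex.div_im, Complex.sub_im, Complex.add_im, Complex.neg_im,
    Complex.neg_re, Complex.one_im, Complex.one_re, Complex.ofReal_im,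
    Complex.ofReal_re, neg_zero, zero_div, zero_mul, mul_zero, sub_zero,
    zero_sub] at h
  -- h : -(-1 * m.im) / normSq m ... etc; clear denominators
  have key : m.im = (ω.im + m.im) *
      (Complex.normSq m + Complex.normSq m / Complex.normSq (ω + m) * ‖z‖ ^ 2) := by
    field_simp at h ⊢
    nlinarith [h]
  have hS : Complex.normSq m + Complex.normSq m / Complex.normSq (ω + m) * ‖z‖ ^ 2 > 0 := by
    positivity
  set S := Complex.normSq m + Complex.normSq m / Complex.normSq (ω + m) * ‖z‖ ^ 2 with hSdef
  have hSlt : S < 1 := by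
    have h2 : m.im * m.im * (1 - S) = ω.im * m.im * S := by nlinarith [congrArg (fun x => x * m.im) key]
    nlinarith [mul_pos hm hS, mul_self_pos.mpr hmim]
  have hrw : ‖m‖ ^ 2 + ‖m / (ω + m)‖ ^ 2 * ‖z‖ ^ 2 = S := by
    rw [hSdef]
    rw [norm_div]
    rw [div_pow]
    rw [← Complex.sq_norm m, ← Complex.sq_norm (ω + m)]
  refine ⟨by rw [hrw]; exact hSlt, ?_, ?_⟩
  · have h1 : ‖m / (ω + m)‖ ^ 2 * ‖z‖ ^ 2 < 1 := by
      nlinarith [sq_nonneg ‖m‖, hrw.symm ▸ hSlt]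
    nlinarith [norm_nonneg (m / (ω + m)), norm_nonneg z, mul_nonneg (norm_nonneg (m / (ω + m))) (norm_nonneg z)]
  · have h1 : ‖m‖ ^ 2 < 1 := by
      nlinarith [sq_nonneg (‖m / (ω + m)‖ * ‖z‖), hrw.symm ▸ hSlt, mul_nonneg (sq_nonneg ‖m / (ω + m)‖) (sq_nonneg ‖z‖)]
    nlinarith [norm_nonneg m]
end

section
/- Let m solve -1/m = iη + m - |z|²/(iη + m) on the imaginary axis ω = iη with η > 0 and η·Im(m) > 0, and let u = m/(iη+m). If |m|² + |u|²·|z|² < 1, then Re(m) = 0, i.e., m is purely imaginary. -/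
open Complex

/-- on the imaginary axis, m is purely imaginary. -/
theorem dyson_re_m_eq_zero (z : ℂ) (η : ℝ) (hη : 0 < η) (m : ℂ) (hm : η * m.im > 0)
    (heq : -1 / m = Complex.I * η + m - ((‖z‖ ^ 2 : ℝ) : ℂ) / (Complex.I * η + m))
    (h : ‖m‖ ^ 2 + ‖m / (Complex.I * η + m)‖ ^ 2 * ‖z‖ ^ 2 < 1) :
    m.re = 0 := by
  have hbm : 0 < m.im := by by_contra hc; push_neg at hc; nlinarith
  have hm0 : m ≠ 0 := fun hc => by simp [hc] at hbm
  set w : ℂ := Complex.I * η + m with hw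
  have hwim : w.im = η + m.im := by simp [hw]
  have hwre : w.re = m.re := by simp [hw]
  have hw0 : w ≠ 0 := fun hc => by
    have := congrArg Complex.im hc
    rw [hwim] at this; simp at this; linarith
  have hnm : 0 < Complex.normSq m := Complex.normSq_pos.mpr hm0
  have hnw : 0 < Complex.normSq w := Complex.normSq_pos.mpr hw0
  have h1 := congrArg Complex.re heq
  simp only [Complex.div_re, Complex.sub_re, Complex.add_re, Complex.mul_re,
    Complex.I_re, Complex.I_im, Complex.ofReal_re, Complex.ofReal_im,
    Complex.neg_re, Complex.neg_im, Complex.one_re, Complex.one_im, hwre, hwim] at h1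
  have hnorm : ‖m‖ ^ 2 = Complex.normSq m := by
    rw [Complex.sq_norm]
  have hnormw : ‖w‖ ^ 2 = Complex.normSq w := by
    rw [Complex.sq_norm]
  have h2 : ‖m / w‖ ^ 2 = Complex.normSq m / Complex.normSq w := by
    rw [norm_div, div_pow, hnorm, hnormw]
  rw [hnorm, h2] at h
  set r : ℝ := ‖z‖ ^ 2 with hr
  have hr0 : 0 ≤ r := by positivity
  have h1' : -(m.re * Complex.normSq w) =
      m.re * Complex.normSq m * Complex.normSq w - r * m.re * Complex.normSq m := by
    field_simp at h1
    linarith [h1]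
  have h' : Complex.normSq m * Complex.normSq w + Complex.normSq m * r < Complex.normSq w := by
    have h3 : Complex.normSq m * r / Complex.normSq w < 1 - Complex.normSq m := by
      rw [div_mul_eq_mul_div] at h; linarith
    rw [div_lt_iff₀ hnw] at h3
    nlinarith [h3]
  nlinarith [h1', h', sq_nonneg m.re, mul_pos hnm hnw]
end

section
/- Let m solve the scalar Dyson equation at ω = iη, η > 0, with Im m > 0 and Re m = 0, u = m/(iη+m), β = 1 - m² - u²|z|². If |m|² + |u|²|z|² < 1, then |β| ≥ (Im m)². -/
open Complex

/-- |β| ≥ (Im m)². -/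
theorem dyson_beta_lower_bound (z : ℂ) (η : ℝ) (hη : 0 < η) (m : ℂ) (hm : 0 < m.im)
    (hre : m.re = 0)
    (heq : -1 / m = Complex.I * η + m - ((‖z‖ ^ 2 : ℝ) : ℂ) / (Complex.I * η + m))
    (h : ‖m‖ ^ 2 + ‖m / (Complex.I * η + m)‖ ^ 2 * ‖z‖ ^ 2 < 1) :
    m.im ^ 2 ≤ ‖1 - m ^ 2 - (m / (Complex.I * η + m)) ^ 2 * ((‖z‖ ^ 2 : ℝ) : ℂ)‖ := by
  set u := m / (Complex.I * η + m) with hu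
  set c := ‖z‖ ^ 2 with hc
  have hc0 : (0:ℝ) ≤ c := by positivity
  have hm0 : (0:ℝ) ≤ ‖m‖ ^ 2 := by positivity
  have h1 : (u ^ 2).re ≤ ‖u‖ ^ 2 := by
    calc (u ^ 2).re ≤ ‖u ^ 2‖ := Complex.re_le_norm _
    _ = ‖u‖ ^ 2 := by rw [norm_pow]
  have hre2 : (1 - m ^ 2 - u ^ 2 * ((c:ℝ):ℂ)).re = 1 + m.im ^ 2 - (u ^ 2).re * c := by
    simp [Complex.sub_re, Complex.mul_re, pow_two, hre]
  have h2 : m.im ^ 2 ≤ (1 - m ^ 2 - u ^ 2 * ((c:ℝ):ℂ)).re := by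
    rw [hre2]
    nlinarith [mul_le_mul_of_nonneg_right h1 hc0]
  calc m.im ^ 2 ≤ (1 - m ^ 2 - u ^ 2 * ((c:ℝ):ℂ)).re := h2
  _ ≤ ‖1 - m ^ 2 - u ^ 2 * ((c:ℝ):ℂ)‖ := Complex.re_le_norm _
end
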